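/- For any map of pairs f : (X, A) → (X, A) with f|_A = id_A, the composition i_* ∘ var(f) : H_n(X, A) → H_n(X, A) equals f_* − id on relative homology, where i_* is the map H_n(X) → H_n(X, A). -/

import Mathlib

/-! The variation of a relative cycle `c` is represented by `f c - c`, which is an absolute cycle
because `f` fixes the relative boundary `∂c ∈ A`. Read in `H_n(X, A)`, the class of `f c - c` is
`[f c] - [c]` by additivity of the class map on relative cycles. -/

theorem d_map_sub_self_eq_zero {C₁ C₀ : Type} [AddCommGroup C₁] [AddCommGroup C₀]
    {d₁ : C₁ →+ C₀} {A₀ : AddSubgroup C₀} {f₁ : C₁ →+ C₁} {f₀ : C₀ →+ C₀}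
    (hfd₁ : ∀ c : C₁, f₀ (d₁ c) = d₁ (f₁ c)) (hfA₀ : ∀ a ∈ A₀, f₀ a = a)
    {c : C₁} (hc : d₁ c ∈ A₀) : d₁ (f₁ c - c) = 0 := by
  rw [map_sub, ← hfd₁, hfA₀ _ hc, sub_self]

/-- `H_n(X)` and `H_n(X, A)` are presented by class maps `π` defined on (relative) cycles of
degree `n`; `f₁`, `f₀` are the chain map of `f` in degrees `n`, `n - 1`. -/
theorem i_comp_variation_eq_f_sub_id_general
    {C₁ C₀ : Type} [AddCommGroup C₁] [AddCommGroup C₀]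
    (d₁ : C₁ →+ C₀)
    (A₀ : AddSubgroup C₀)
    (f₁ : C₁ →+ C₁) (f₀ : C₀ →+ C₀)
    (hfd₁ : ∀ c : C₁, f₀ (d₁ c) = d₁ (f₁ c))
    (hfA₀ : ∀ a ∈ A₀, f₀ a = a)
    -- the homology groups `H_n(X)` and `H_n(X, A)`, presented abstractly
    {Habs Hrel : Type} [AddCommGroup Habs] [AddCommGroup Hrel]
    (πabs : C₁ → Habs) (πrel : C₁ → Hrel)
    (πrel_surj : ∀ h : Hrel, ∃ c : C₁, d₁ c ∈ A₀ ∧ πrel c = h)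
    (πrel_add : ∀ c c' : C₁, d₁ c ∈ A₀ → d₁ c' ∈ A₀ →
      πrel (c + c') = πrel c + πrel c')
    -- the induced maps on homology
    (i : Habs →+ Hrel)
    (hi : ∀ c : C₁, d₁ c = 0 → i (πabs c) = πrel c)
    (frel : Hrel →+ Hrel)
    (hfrel : ∀ c : C₁, d₁ c ∈ A₀ → frel (πrel c) = πrel (f₁ c))
    (var : Hrel →+ Habs)
    (hvar : ∀ c : C₁, d₁ c ∈ A₀ → var (πrel c) = πabs (f₁ c - c)) :
    i.comp var = frel - AddMonoidHom.id Hrel := by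
  ext h
  obtain ⟨c, hc, rfl⟩ := πrel_surj h
  have hcycle : d₁ (f₁ c - c) = 0 := d_map_sub_self_eq_zero hfd₁ hfA₀ hc
  have hsplit : πrel (f₁ c) = πrel (f₁ c - c) + πrel c := by
    rw [← πrel_add _ _ (hcycle ▸ A₀.zero_mem) hc, sub_add_cancel]
  rw [AddMonoidHom.comp_apply, hvar c hc, hi _ hcycle, AddMonoidHom.sub_apply, hfrel c hc,
    AddMonoidHom.id_apply, hsplit, add_sub_cancel_right]

/-- Chain-level formalization (Mathlib has no singular homology).  `C₂ → C₁ → C₀`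
are singular chains of `X` in degrees `n+1, n, n−1`, `Aᵢ ⊆ Cᵢ` the chains of
`A ⊆ X`, and `f` the chain map of a map of pairs `f : (X,A) → (X,A)` with
`f|_A = id_A`.  `Habs = H_n(X)` and `Hrel = H_n(X, A)` are presented abstractly
by surjections `π` from (relative) cycles, with classes equal iff the difference
is a (relative) boundary.  `j : H_n(X) → H_n(X, A)` is induced by inclusion,
`frel = f_* : H_n(X,A) → H_n(X,A)`, and `var : H_n(X,A) → H_n(X)` is the
homological variation `[c] ↦ [f c − c]`.  Conclusion: `i_* ∘ var = f_* − id` on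
relative homology, where `i_* : H_n(X) → H_n(X,A)`. -/
theorem i_comp_variation_eq_f_sub_id
    {C₂ C₁ C₀ : Type} [AddCommGroup C₂] [AddCommGroup C₁] [AddCommGroup C₀]
    (d₂ : C₂ →+ C₁) (d₁ : C₁ →+ C₀)
    (A₁ : AddSubgroup C₁) (A₀ : AddSubgroup C₀)
    (hdd : ∀ b : C₂, d₁ (d₂ b) = 0)
    (hdA₁ : ∀ a ∈ A₁, d₁ a ∈ A₀)
    (f₂ : C₂ →+ C₂) (f₁ : C₁ →+ C₁) (f₀ : C₀ →+ C₀)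
    (hfd₂ : ∀ b : C₂, f₁ (d₂ b) = d₂ (f₂ b))
    (hfd₁ : ∀ c : C₁, f₀ (d₁ c) = d₁ (f₁ c))
    (hfA₁ : ∀ a ∈ A₁, f₁ a = a)
    (hfA₀ : ∀ a ∈ A₀, f₀ a = a)
    -- the homology groups `H_n(X)` and `H_n(X, A)`, presented abstractly
    {Habs Hrel : Type} [AddCommGroup Habs] [AddCommGroup Hrel]
    (πabs : C₁ → Habs) (πrel : C₁ → Hrel)
    (πabs_surj : ∀ h : Habs, ∃ c : C₁, d₁ c = 0 ∧ πabs c = h)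
    (πrel_surj : ∀ h : Hrel, ∃ c : C₁, d₁ c ∈ A₀ ∧ πrel c = h)
    (πabs_add : ∀ c c' : C₁, d₁ c = 0 → d₁ c' = 0 →
      πabs (c + c') = πabs c + πabs c')
    (πrel_add : ∀ c c' : C₁, d₁ c ∈ A₀ → d₁ c' ∈ A₀ →
      πrel (c + c') = πrel c + πrel c')
    (πabs_eq : ∀ c c' : C₁, d₁ c = 0 → d₁ c' = 0 →
      (πabs c = πabs c' ↔ ∃ b : C₂, c - c' = d₂ b))
    (πrel_eq : ∀ c c' : C₁, d₁ c ∈ A₀ → d₁ c' ∈ A₀ →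
      (πrel c = πrel c' ↔ ∃ b : C₂, ∃ a ∈ A₁, c - c' = d₂ b + a))
    -- the induced maps on homology
    (i : Habs →+ Hrel)
    (hi : ∀ c : C₁, d₁ c = 0 → i (πabs c) = πrel c)
    (frel : Hrel →+ Hrel)
    (hfrel : ∀ c : C₁, d₁ c ∈ A₀ → frel (πrel c) = πrel (f₁ c))
    (var : Hrel →+ Habs)
    (hvar : ∀ c : C₁, d₁ c ∈ A₀ → var (πrel c) = πabs (f₁ c - c)) :
    i.comp var = frel - AddMonoidHom.id Hrel :=
  i_comp_variation_eq_f_sub_id_general d₁ A₀ f₁ f₀ hfd₁ hfA₀ πabs πrel πrel_surj πrel_add i hi frel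
    hfrel var hvar
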